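/- Let S be a finite set with |S| ≥ 2, let d be a metric on S, and suppose there is a linear order ≺ on S used for tie-breaking. For each v ∈ S let π(v) be the point of S∖{v} minimizing d(v,·), breaking ties by ≺. Then every directed cycle in the functional graph with edge set {(v, π(v)) : v ∈ S} has length exactly 2. -/
import Mathlib


/-- In the nearest-neighbor functional graph on a finite metric
space with consistent tie-breaking by a linear order, every directed cycle has
length exactly 2. -/
theorem stmt_8 {X : Type*} [MetricSpace X] [LinearOrder X]
    (S : Finset X) (hS : 2 ≤ S.card) (π : X → X)
    (hπ : ∀ v ∈ S, π v ∈ S.erase v ∧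
      ∀ u ∈ S.erase v,
        dist v (π v) < dist v u ∨ (dist v (π v) = dist v u ∧ π v ≤ u))
    (v : X) (hv : v ∈ S) (k : ℕ) (hk : 1 ≤ k)
    (hcyc : π^[k] v = v)
    (hmin : ∀ j, 0 < j → j < k → π^[j] v ≠ v) :
    k = 2 := by
  -- all iterates stay in S
  have hmem : ∀ i, π^[i] v ∈ S := by
    intro i
    induction i with
    | zero => simpa using hv
    | succ n ih =>
      rw [Function.iterate_succ_apply']
      exact Finset.mem_of_mem_erase (hπ _ ih).1
  have hne : ∀ i, π^[i+1] v ≠ π^[i] v := by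
    intro i
    rw [Function.iterate_succ_apply']
    exact Finset.ne_of_mem_erase (hπ _ (hmem i)).1
  set d : ℕ → ℝ := fun i => dist (π^[i] v) (π^[i+1] v) with hd
  -- non-increasing distances
  have hle : ∀ i, d (i+1) ≤ d i := by
    intro i
    have hu : π^[i] v ∈ (S.erase (π^[i+1] v)) :=
      Finset.mem_erase.2 ⟨(hne i).symm, hmem i⟩
    have := (hπ _ (hmem (i+1))).2 _ hu
    have h1 : dist (π^[i+1] v) (π (π^[i+1] v)) = d (i+1) := by
      simp only [hd]
      rw [show π (π^[i+1] v) = π^[i+1+1] v from (Function.iterate_succ_apply' π (i+1) v).symm]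
    have h2 : dist (π^[i+1] v) (π^[i] v) = d i := by
      simp only [hd]; exact dist_comm _ _
    rcases this with h | ⟨h, _⟩
    · rw [h1, h2] at h; exact h.le
    · rw [h1, h2] at h; exact h.le
  have hanti : ∀ n m, m ≤ n → d n ≤ d m := by
    intro n
    induction n with
    | zero => intro m h; simp_all
    | succ p ih =>
      intro m h
      rcases Nat.eq_or_lt_of_le h with h | h
      · rw [h]
      · exact (hle p).trans (ih m (Nat.lt_succ_iff.1 h))
  have hper : ∀ i, π^[i+k] v = π^[i] v := by
    intro i
    rw [Function.iterate_add_apply, hcyc]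
  have hconst : ∀ i, d (i+1) = d i := by
    intro i
    refine le_antisymm (hle i) ?_
    have h1 : d (i+k) = d i := by
      simp only [hd]
      rw [show i + k + 1 = (i+1) + k by ring, hper, hper]
    have h2 : d (i+k) ≤ d (i+1) := hanti _ _ (by omega)
    rw [h1] at h2; exact h2
  -- tie-break gives monotone along even steps
  have hstep : ∀ i, π^[i+2] v ≤ π^[i] v := by
    intro i
    have hu : π^[i] v ∈ (S.erase (π^[i+1] v)) :=
      Finset.mem_erase.2 ⟨(hne i).symm, hmem i⟩
    have h1 : dist (π^[i+1] v) (π (π^[i+1] v)) = d (i+1) := by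
      simp only [hd]
      rw [show π (π^[i+1] v) = π^[i+1+1] v from (Function.iterate_succ_apply' π (i+1) v).symm]
    have h2 : dist (π^[i+1] v) (π^[i] v) = d i := by
      simp only [hd]; exact dist_comm _ _
    rcases (hπ _ (hmem (i+1))).2 _ hu with h | ⟨_, h⟩
    · rw [h1, h2, hconst i] at h; exact absurd h (lt_irrefl _)
    · rw [← Function.iterate_succ_apply' π (i+1)] at h; exact h
  have heven : ∀ m, π^[2*(m+1)] v ≤ π^[2] v := by
    intro m
    induction m with
    | zero => simp
    | succ p ih =>
      have := hstep (2*(p+1))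
      rw [show 2*(p+1)+2 = 2*(p+1+1) by ring] at this
      exact this.trans ih
  have h2k : π^[2*k] v = v := by
    rw [two_mul, Function.iterate_add_apply, hcyc, hcyc]
  have hvle : v ≤ π^[2] v := by
    have := heven (k-1)
    rw [show 2*(k-1+1) = 2*k by omega, h2k] at this
    exact this
  have h2v : π^[2] v = v := le_antisymm (by simpa using hstep 0) hvle
  -- conclude
  by_contra hk2
  have hk1 : k ≠ 1 := by
    intro h; subst h
    exact hne 0 (by simpa using hcyc)
  have : 2 < k := by omega
  exact hmin 2 (by norm_num) this h2v
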